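/- Each of the four axiom schemas X1: p → (q → p), X2: (p → (q → r)) → ((p → q) → (p → r)), X3: ¬p → (p → q), and X4: (p → ¬p) → ¬p evaluates to the designated value 2 under every valuation of its variables into {0,1,2} in the three-valued matrix 𝔗'. -/
import Mathlib

/-- Propositional formulas over ¬ and →. -/
inductive Fm where
  | var : Nat → Fm
  | neg : Fm → Fm
  | imp : Fm → Fm → Fm
deriving DecidableEq

open Fm

/-- Classical two-valued evaluation (→ is material implication). -/
def evalB (v : Nat → Bool) : Fm → Bool
  | var n => v n
  | neg φ => ! evalB v φ
  | imp φ ψ => !(evalB v φ) || evalB v ψ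

/-- Negation of the three-valued matrix 𝔗'. -/
def gneg : Fin 3 → Fin 3 := ![1, 2, 1]

/-- Implication of the three-valued matrix 𝔗'. -/
def gimp : Fin 3 → Fin 3 → Fin 3 := ![![2, 1, 2], ![2, 2, 2], ![0, 1, 2]]

/-- Evaluation in the three-valued matrix 𝔗'. -/
def eval3 (v : Nat → Fin 3) : Fm → Fin 3
  | var n => v n
  | neg φ => gneg (eval3 v φ)
  | imp φ ψ => gimp (eval3 v φ) (eval3 v ψ)

/-- Uniform substitution of formulas for variables. -/
def subst (s : Nat → Fm) : Fm → Fm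
  | var n => s n
  | neg φ => neg (subst s φ)
  | imp φ ψ => imp (subst s φ) (subst s ψ)

/-- Provability in the Hilbert system H_X: axiom schemas X1–X4,
    closed under modus ponens and uniform substitution. -/
inductive Prov : Fm → Prop where
  | x1 : Prov (imp (var 0) (imp (var 1) (var 0)))
  | x2 : Prov (imp (imp (var 0) (imp (var 1) (var 2)))
           (imp (imp (var 0) (var 1)) (imp (var 0) (var 2))))
  | x3 : Prov (imp (neg (var 0)) (imp (var 0) (var 1)))
  | x4 : Prov (imp (imp (var 0) (neg (var 0))) (neg (var 0)))
  | mp {φ ψ : Fm} : Prov (imp φ ψ) → Prov φ → Prov ψ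
  | sub {φ : Fm} (s : Nat → Fm) : Prov φ → Prov (subst s φ)

/-- Peirce's law ((p → q) → p) → p. -/
def peirceFm : Fm := imp (imp (imp (var 0) (var 1)) (var 0)) (var 0)

open Fm in
theorem axioms_three_valued_tautologies :
    ∀ v : Nat → Fin 3,
      eval3 v (imp (var 0) (imp (var 1) (var 0))) = 2 ∧
      eval3 v (imp (imp (var 0) (imp (var 1) (var 2)))
        (imp (imp (var 0) (var 1)) (imp (var 0) (var 2)))) = 2 ∧
      eval3 v (imp (neg (var 0)) (imp (var 0) (var 1))) = 2 ∧
      eval3 v (imp (imp (var 0) (neg (var 0))) (neg (var 0))) = 2 := by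
  intro v
  have key : ∀ a b c : Fin 3,
      gimp a (gimp b a) = 2 ∧
      gimp (gimp a (gimp b c)) (gimp (gimp a b) (gimp a c)) = 2 ∧
      gimp (gneg a) (gimp a b) = 2 ∧
      gimp (gimp a (gneg a)) (gneg a) = 2 := by decide
  exact key (v 0) (v 1) (v 2)
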